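/- arXiv:math/0702260 — 3 statements merged into one kernel-verified Lean document; each statement's English description precedes it below -/
import Mathlib

section
/- Let f : ℝ → ℝ be continuous and let C be its convex minorant, i.e. the greatest convex function with C ≤ f on ℝ (assumed to exist and be finite). Suppose a ∈ ℝ is such that f(a) = C(a) and f is differentiable at a. Then f(x) ≥ f(a) + (x − a) f'(a) for all x ∈ ℝ. -/
/-- At a contact point a of a continuous function f with its convex minorant C, where f is
differentiable, the global tangent inequality f(x) ≥ f(a) + (x−a) f'(a) holds. -/
theorem tangent_inequality_at_contact_point
    (f C : ℝ → ℝ) (hf : Continuous f)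
    (hCconv : ConvexOn ℝ Set.univ C)
    (hCle : ∀ x, C x ≤ f x)
    (hCmax : ∀ g : ℝ → ℝ, ConvexOn ℝ Set.univ g → (∀ x, g x ≤ f x) → ∀ x, g x ≤ C x)
    (a : ℝ) (hcontact : f a = C a) (hdiff : DifferentiableAt ℝ f a) :
    ∀ x : ℝ, f a + (x - a) * deriv f a ≤ f x := by
  intro x
  have htends := hasDerivAt_iff_tendsto_slope.mp hdiff.hasDerivAt
  rcases lt_trichotomy x a with hx | rfl | hx
  · -- x < a
    have key : (C x - C a) / (x - a) ≤ deriv f a := by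
      have h1 : Filter.Tendsto (slope f a) (nhdsWithin a (Set.Ioi a)) (nhds (deriv f a)) :=
        htends.mono_left (nhdsWithin_mono a (fun y hy => ne_of_gt hy))
      refine ge_of_tendsto h1 ?_
      filter_upwards [self_mem_nhdsWithin] with y (hy : a < y)
      have hd : 0 < y - a := by linarith
      have hslope : (C y - C a) / (y - a) ≤ slope f a y := by
        rw [slope_def_field, div_le_div_iff₀ hd hd]
        nlinarith [hCle y]
      refine le_trans ?_ hslope
      have hadj := hCconv.slope_mono_adjacent (Set.mem_univ x) (Set.mem_univ y) hx hy
      calc (C x - C a) / (x - a) = (C a - C x) / (a - x) := by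
            rw [div_eq_div_iff (by linarith) (by linarith)]; ring
        _ ≤ (C y - C a) / (y - a) := hadj
    have hmul : (x - a) * deriv f a ≤ C x - C a := by
      have hd : x - a < 0 := by linarith
      have := (div_le_iff_of_neg hd).mp key
      linarith
    calc f a + (x - a) * deriv f a ≤ f a + (C x - C a) := by linarith
      _ = C x := by rw [hcontact]; ring
      _ ≤ f x := hCle x
  · simp
  · -- a < x
    have key : deriv f a ≤ (C x - C a) / (x - a) := by
      have h1 : Filter.Tendsto (slope f a) (nhdsWithin a (Set.Iio a)) (nhds (deriv f a)) :=
        htends.mono_left (nhdsWithin_mono a (fun y hy => ne_of_lt hy))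
      refine le_of_tendsto h1 ?_
      filter_upwards [self_mem_nhdsWithin] with y (hy : y < a)
      have hd : 0 < a - y := by linarith
      have hslope : slope f a y ≤ (C y - C a) / (y - a) := by
        rw [slope_def_field]
        have e1 : (f y - f a) / (y - a) = (f a - f y) / (a - y) := by
          rw [div_eq_div_iff (by linarith) (by linarith)]; ring
        have e2 : (C y - C a) / (y - a) = (C a - C y) / (a - y) := by
          rw [div_eq_div_iff (by linarith) (by linarith)]; ring
        rw [e1, e2, div_le_div_iff₀ hd hd]
        nlinarith [hCle y]
      refine le_trans hslope ?_
      have hadj := hCconv.slope_mono_adjacent (Set.mem_univ y) (Set.mem_univ x) hy hx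
      calc (C y - C a) / (y - a) = (C a - C y) / (a - y) := by
            rw [div_eq_div_iff (by linarith) (by linarith)]; ring
        _ ≤ (C x - C a) / (x - a) := hadj
    have hmul : (x - a) * deriv f a ≤ C x - C a := by
      have hd : 0 < x - a := by linarith
      have := (le_div_iff₀ hd).mp key
      linarith
    calc f a + (x - a) * deriv f a ≤ f a + (C x - C a) := by linarith
      _ = C x := by rw [hcontact]; ring
      _ ≤ f x := hCle x
end

section
/- Let g : ℝ → ℝ be continuous, bounded above, attaining its supremum, and satisfying g(a) ≤ M − c a² for some constants M ∈ ℝ, c > 0 and all |a| large. Then lim_{ν → 0+} 2ν log ∫_ℝ exp(g(a)/(2ν)) da = sup_{a ∈ ℝ} g(a). -/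
open MeasureTheory Filter

set_option maxHeartbeats 1000000

/-- Laplace approximation: 2ν log ∫ exp(g(a)/(2ν)) da → sup g as ν → 0+, for g continuous,
attaining its supremum and decaying quadratically at infinity. -/
theorem laplace_approximation
    (g : ℝ → ℝ) (hg : Continuous g)
    (hattain : ∃ a₀ : ℝ, ∀ a : ℝ, g a ≤ g a₀)
    (hquad : ∃ M c R : ℝ, 0 < c ∧ ∀ a : ℝ, R ≤ |a| → g a ≤ M - c * a ^ 2) :
    Tendsto (fun ν : ℝ => 2 * ν * Real.log (∫ a : ℝ, Real.exp (g a / (2 * ν))))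
      (nhdsWithin 0 (Set.Ioi 0)) (nhds (⨆ a : ℝ, g a)) := by
  obtain ⟨a₀, ha₀⟩ := hattain
  obtain ⟨M, c, R, hc, hMR⟩ := hquad
  set S := g a₀ with hSdef
  have hsup : (⨆ a : ℝ, g a) = S :=
    le_antisymm (ciSup_le ha₀) (le_ciSup ⟨S, by rintro y ⟨a, rfl⟩; exact ha₀ a⟩ a₀)
  rw [hsup]
  -- choose R₁ large
  set R₁ : ℝ := max (max R 1) (Real.sqrt ((M - S) / c)) with hR₁def
  have hR₁R : R ≤ R₁ := le_trans (le_max_left _ _) (le_max_left _ _)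
  have hR₁1 : (1 : ℝ) ≤ R₁ := le_trans (le_max_right R 1) (le_max_left _ _)
  have hR₁0 : 0 < R₁ := lt_of_lt_of_le one_pos hR₁1
  have hMS : M - c * R₁ ^ 2 ≤ S := by
    have h1 : Real.sqrt ((M - S) / c) ≤ R₁ := le_max_right _ _
    have h2 : (M - S) / c ≤ R₁ ^ 2 := by
      rcases le_or_gt ((M - S) / c) 0 with h | h
      · nlinarith
      · calc (M - S) / c = Real.sqrt ((M - S) / c) ^ 2 := (Real.sq_sqrt h.le).symm
          _ ≤ R₁ ^ 2 := by nlinarith [Real.sqrt_nonneg ((M - S) / c)]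
    have := (div_le_iff₀ hc).mp h2
    linarith
  -- global quadratic upper bound for g
  have hbound : ∀ a : ℝ, g a ≤ S + c * (R₁ ^ 2 - a ^ 2) := by
    intro a
    rcases le_or_gt (|a|) R₁ with h | h
    · have ha2 : a ^ 2 ≤ R₁ ^ 2 := by
        have := pow_le_pow_left₀ (abs_nonneg a) h 2
        rwa [sq_abs] at this
      nlinarith [ha₀ a]
    · have hga := hMR a (hR₁R.trans h.le)
      nlinarith
  -- the dominating function
  set ψ : ℝ → ℝ := fun a => Real.exp (c / 2 * (R₁ ^ 2 - a ^ 2)) with hψdef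
  have hψeq : ψ = fun a => Real.exp (c / 2 * R₁ ^ 2) * Real.exp (-(c / 2) * a ^ 2) := by
    funext a
    show Real.exp (c / 2 * (R₁ ^ 2 - a ^ 2)) = _
    rw [← Real.exp_add]
    congr 1
    ring
  have hψint : Integrable ψ := by
    rw [hψeq]; exact (integrable_exp_neg_mul_sq (b := c / 2) (by positivity)).const_mul _
  set K : ℝ := ∫ a, ψ a with hKdef
  have hK : 0 < K := by
    rw [hKdef, hψeq]
    rw [integral_const_mul, integral_gaussian]
    have : 0 < Real.pi / (c / 2) := by positivity
    positivity
  -- integrability of the integrand for every ν > 0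
  have hint : ∀ ν : ℝ, 0 < ν → Integrable (fun a => Real.exp (g a / (2 * ν))) := by
    intro ν hν
    have h2ν : (0 : ℝ) < 2 * ν := by linarith
    have hdom : Integrable (fun a : ℝ =>
        Real.exp ((S + c * R₁ ^ 2) / (2 * ν)) * Real.exp (-(c / (2 * ν)) * a ^ 2)) :=
      (integrable_exp_neg_mul_sq (b := c / (2 * ν)) (by positivity)).const_mul _
    refine hdom.mono (Real.continuous_exp.comp (hg.div_const (2 * ν))).aestronglyMeasurable ?_
    refine Eventually.of_forall fun a => ?_
    rw [Real.norm_eq_abs, Real.norm_eq_abs, abs_of_nonneg (Real.exp_pos _).le,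
      abs_of_nonneg (by positivity), ← Real.exp_add]
    apply Real.exp_le_exp.2
    have heq : (S + c * R₁ ^ 2) / (2 * ν) + -(c / (2 * ν)) * a ^ 2
        = (S + c * (R₁ ^ 2 - a ^ 2)) / (2 * ν) := by field_simp; ring
    rw [heq]
    exact div_le_div_of_nonneg_right (hbound a) h2ν.le
  -- positivity of the integral
  have hpos : ∀ ν : ℝ, 0 < ν → 0 < ∫ a, Real.exp (g a / (2 * ν)) := by
    intro ν hν
    rw [integral_pos_iff_support_of_nonneg_ae
      (Eventually.of_forall fun a => (Real.exp_pos _).le) (hint ν hν)]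
    have hsupp : Function.support (fun a : ℝ => Real.exp (g a / (2 * ν))) = Set.univ := by
      ext a; simp [Function.support, (Real.exp_pos _).ne']
    rw [hsupp]
    simp
  -- main ε-argument
  rw [Metric.tendsto_nhds]
  intro ε hε
  obtain ⟨δ, hδpos, hδ⟩ := Metric.continuousAt_iff.mp (hg.continuousAt (x := a₀)) (ε / 4)
    (by positivity)
  set δ' : ℝ := δ / 2 with hδ'def
  have hδ'pos : 0 < δ' := by positivity
  have hlow : ∀ a ∈ Set.Icc (a₀ - δ') (a₀ + δ'), S - ε / 2 ≤ g a := by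
    intro a ha
    obtain ⟨h1, h2⟩ := ha
    have hd : dist a a₀ < δ := by
      rw [Real.dist_eq, abs_lt]; constructor <;> [linarith; linarith]
    have := hδ hd
    rw [Real.dist_eq, abs_lt] at this
    linarith [this.1]
  -- eventual smallness of the error terms
  have tlim : ∀ C : ℝ, Tendsto (fun ν : ℝ => 2 * ν * Real.log C) (nhdsWithin 0 (Set.Ioi 0))
      (nhds 0) := by
    intro C
    have : Tendsto (fun ν : ℝ => 2 * ν * Real.log C) (nhds 0)
        (nhds (2 * 0 * Real.log C)) := by
      exact ((continuous_const.mul continuous_id).mul continuous_const).tendsto 0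
    simpa using this.mono_left nhdsWithin_le_nhds
  have e1 := Metric.tendsto_nhds.mp (tlim K) (ε / 2) (by positivity)
  have e2 := Metric.tendsto_nhds.mp (tlim (2 * δ')) (ε / 2) (by positivity)
  filter_upwards [self_mem_nhdsWithin,
    Ioo_mem_nhdsGT_of_mem (Set.left_mem_Ico.2 one_pos), e1, e2] with ν hν hν1 h1 h2
  have hν0 : (0 : ℝ) < ν := hν
  have h2ν : (0 : ℝ) < 2 * ν := by linarith
  have hνle1 : ν < 1 := hν1.2
  rw [Real.dist_eq, sub_zero] at h1 h2
  -- upper bound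
  have hub : (∫ a, Real.exp (g a / (2 * ν))) ≤ Real.exp (S / (2 * ν)) * K := by
    have hpt : ∀ a : ℝ, Real.exp (g a / (2 * ν)) ≤ Real.exp (S / (2 * ν)) * ψ a := by
      intro a
      rcases le_or_gt (|a|) R₁ with h | h
      · have ha2 : a ^ 2 ≤ R₁ ^ 2 := by
          have := pow_le_pow_left₀ (abs_nonneg a) h 2
          rwa [sq_abs] at this
        calc Real.exp (g a / (2 * ν)) ≤ Real.exp (S / (2 * ν)) :=
              Real.exp_le_exp.2 (div_le_div_of_nonneg_right (ha₀ a) h2ν.le)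
          _ = Real.exp (S / (2 * ν)) * 1 := (mul_one _).symm
          _ ≤ Real.exp (S / (2 * ν)) * ψ a := by
              apply mul_le_mul_of_nonneg_left _ (Real.exp_pos _).le
              exact Real.one_le_exp (by nlinarith)
      · have hga : g a ≤ S - c * (a ^ 2 - R₁ ^ 2) := by
          have := hMR a (hR₁R.trans h.le)
          nlinarith
        have hu : 0 ≤ c * (a ^ 2 - R₁ ^ 2) := by
          have ha2 : R₁ ^ 2 ≤ a ^ 2 := by
            have := pow_le_pow_left₀ hR₁0.le h.le 2
            rwa [sq_abs] at this
          nlinarith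
        have hdiv : c * (a ^ 2 - R₁ ^ 2) / 2 ≤ c * (a ^ 2 - R₁ ^ 2) / (2 * ν) :=
          div_le_div_of_nonneg_left hu h2ν (by linarith)
        calc Real.exp (g a / (2 * ν))
            ≤ Real.exp ((S - c * (a ^ 2 - R₁ ^ 2)) / (2 * ν)) :=
              Real.exp_le_exp.2 (div_le_div_of_nonneg_right hga h2ν.le)
          _ ≤ Real.exp (S / (2 * ν) + c / 2 * (R₁ ^ 2 - a ^ 2)) := by
              apply Real.exp_le_exp.2
              rw [sub_div]
              have : c / 2 * (R₁ ^ 2 - a ^ 2) = -(c * (a ^ 2 - R₁ ^ 2) / 2) := by ring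
              rw [this]
              linarith
          _ = Real.exp (S / (2 * ν)) * ψ a := by rw [Real.exp_add]
    calc (∫ a, Real.exp (g a / (2 * ν)))
        ≤ ∫ a, Real.exp (S / (2 * ν)) * ψ a :=
          integral_mono (hint ν hν0) (hψint.const_mul _) hpt
      _ = Real.exp (S / (2 * ν)) * K := integral_const_mul _ _
  have hFub : 2 * ν * Real.log (∫ a, Real.exp (g a / (2 * ν))) ≤ S + 2 * ν * Real.log K := by
    have hlog : Real.log (∫ a, Real.exp (g a / (2 * ν))) ≤ S / (2 * ν) + Real.log K := by
      calc Real.log (∫ a, Real.exp (g a / (2 * ν)))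
          ≤ Real.log (Real.exp (S / (2 * ν)) * K) := Real.log_le_log (hpos ν hν0) hub
        _ = S / (2 * ν) + Real.log K := by
            rw [Real.log_mul (Real.exp_ne_zero _) hK.ne', Real.log_exp]
    have := mul_le_mul_of_nonneg_left hlog h2ν.le
    calc 2 * ν * Real.log (∫ a, Real.exp (g a / (2 * ν)))
        ≤ 2 * ν * (S / (2 * ν) + Real.log K) := this
      _ = S + 2 * ν * Real.log K := by field_simp
  -- lower bound
  have hlb : 2 * δ' * Real.exp ((S - ε / 2) / (2 * ν)) ≤ ∫ a, Real.exp (g a / (2 * ν)) := by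
    have hmono : (∫ a in Set.Icc (a₀ - δ') (a₀ + δ'), Real.exp ((S - ε / 2) / (2 * ν)))
        ≤ ∫ a in Set.Icc (a₀ - δ') (a₀ + δ'), Real.exp (g a / (2 * ν)) := by
      refine setIntegral_mono_on (integrableOn_const ?_)
        ((hint ν hν0).integrableOn) measurableSet_Icc ?_
      · rw [Real.volume_Icc]; exact ENNReal.ofReal_ne_top
      · intro a ha
        exact Real.exp_le_exp.2 (div_le_div_of_nonneg_right (hlow a ha) h2ν.le)
    have hconst : (∫ a in Set.Icc (a₀ - δ') (a₀ + δ'), Real.exp ((S - ε / 2) / (2 * ν)))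
        = 2 * δ' * Real.exp ((S - ε / 2) / (2 * ν)) := by
      rw [setIntegral_const, measureReal_def, Real.volume_Icc, smul_eq_mul]
      rw [ENNReal.toReal_ofReal (by linarith)]
      ring_nf
    have hle := setIntegral_le_integral (s := Set.Icc (a₀ - δ') (a₀ + δ')) (hint ν hν0)
      (Eventually.of_forall fun a => (Real.exp_pos _).le)
    linarith
  have hFlb : S - ε / 2 + 2 * ν * Real.log (2 * δ')
      ≤ 2 * ν * Real.log (∫ a, Real.exp (g a / (2 * ν))) := by
    have hlog : Real.log (2 * δ') + (S - ε / 2) / (2 * ν)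
        ≤ Real.log (∫ a, Real.exp (g a / (2 * ν))) := by
      have := Real.log_le_log (by positivity) hlb
      rwa [Real.log_mul (by positivity) (Real.exp_ne_zero _), Real.log_exp] at this
    have := mul_le_mul_of_nonneg_left hlog h2ν.le
    calc S - ε / 2 + 2 * ν * Real.log (2 * δ')
        = 2 * ν * (Real.log (2 * δ') + (S - ε / 2) / (2 * ν)) := by field_simp; ring
      _ ≤ 2 * ν * Real.log (∫ a, Real.exp (g a / (2 * ν))) := this
  rw [Real.dist_eq, abs_lt]
  have habs1 := abs_lt.1 h1
  have habs2 := abs_lt.1 h2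
  constructor
  · linarith [habs2.1]
  · linarith [habs1.2]
end

section
/- Let L ⊆ ℝ be a random closed subset of [0,1] on a probability space, and suppose there exist κ ∈ (0,1) and a sequence δ_n → 0 with δ_n > 0 such that P[L ∩ (x − δ_n, x + δ_n) ≠ ∅] ≤ δ_n^κ for all n and uniformly in x ∈ [0,1]. Then the Hausdorff dimension of L is at most 1 − κ almost surely. -/
open MeasureTheory Filter
open scoped NNReal ENNReal

private lemma aux_dimH_le
    {Ω : Type*} [MeasurableSpace Ω] (μ : Measure Ω) [IsProbabilityMeasure μ]
    (L : Ω → Set ℝ) (hLsub : ∀ ω, L ω ⊆ Set.Icc 0 1)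
    (κ : ℝ) (hκ : κ ∈ Set.Ioo (0 : ℝ) 1)
    (δ : ℕ → ℝ) (hδpos : ∀ n, 0 < δ n) (hδ0 : Tendsto δ atTop (nhds 0))
    (hhit : ∀ n : ℕ, ∀ x ∈ Set.Icc (0 : ℝ) 1,
      μ {ω | (L ω ∩ Set.Ioo (x - δ n) (x + δ n)).Nonempty}
        ≤ ENNReal.ofReal ((δ n) ^ κ))
    (d : ℝ≥0) (hd : 1 - κ < (d : ℝ)) :
    ∀ᵐ ω ∂μ, dimH (L ω) ≤ (d : ℝ≥0∞) := by
  classical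
  have hκ1 : κ < 1 := hκ.2
  have hd0 : (0 : ℝ) < (d : ℝ) := lt_of_le_of_lt (by linarith) hd
  set ε : ℝ := (d : ℝ) + κ - 1 with hεdef
  have hε : 0 < ε := by simp only [hεdef]; linarith
  -- choose a subsequence with δ (φ k) ≤ (1/2)^(k+1)
  have hsub : ∀ k : ℕ, ∃ n, δ n ≤ (2 : ℝ)⁻¹ ^ (k + 1) := by
    intro k
    have hpos : (0 : ℝ) < (2 : ℝ)⁻¹ ^ (k + 1) := by positivity
    have := (hδ0.eventually (gt_mem_nhds hpos)).exists
    exact this.imp fun n h => h.le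
  choose φ hφ using hsub
  have hφ1 : ∀ k, δ (φ k) ≤ 1 := by
    intro k
    refine (hφ k).trans ?_
    exact pow_le_one₀ (by norm_num) (by norm_num)
  -- basic objects
  set N : ℕ → ℕ := fun n => ⌈(δ n)⁻¹⌉₊ with hN
  set c : ℕ → ℕ → ℝ := fun n i => min ((i : ℝ) * δ n) 1 with hcdef
  set A : ℕ → ℕ → Set Ω :=
    fun n i => {ω | (L ω ∩ Set.Ioo (c n i - δ n) (c n i + δ n)).Nonempty} with hA
  set B : ℕ → ℕ → Set Ω := fun n i => toMeasurable μ (A n i) with hB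
  set S : ℕ → Ω → ℝ≥0∞ := fun n ω => ∑ i ∈ Finset.range (N n + 1),
      (B n i).indicator (fun _ => ENNReal.ofReal ((2 * δ n) ^ (d : ℝ))) ω with hS
  have hc01 : ∀ n i, c n i ∈ Set.Icc (0 : ℝ) 1 := by
    intro n i
    exact ⟨le_min (mul_nonneg (Nat.cast_nonneg _) (hδpos n).le) zero_le_one, min_le_right _ _⟩
  have hμB : ∀ n i, μ (B n i) ≤ ENNReal.ofReal ((δ n) ^ κ) := by
    intro n i
    have := measure_toMeasurable (μ := μ) (A n i)
    exact this.le.trans (hhit n _ (hc01 n i))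
  have hSmeas : ∀ n, Measurable (S n) := by
    intro n
    exact Finset.measurable_sum _ fun i _ =>
      measurable_const.indicator (measurableSet_toMeasurable _ _)
  -- integral bound
  have hint : ∀ n, ∫⁻ ω, S n ω ∂μ ≤
      ENNReal.ofReal (((N n + 1 : ℕ) : ℝ)) * ENNReal.ofReal ((2 * δ n) ^ (d : ℝ) * (δ n) ^ κ) := by
    intro n
    rw [hS]
    rw [lintegral_finset_sum _ (fun i _ =>
      measurable_const.indicator (measurableSet_toMeasurable _ _))]
    have hterm : ∀ i ∈ Finset.range (N n + 1),
        (∫⁻ ω, (B n i).indicator (fun _ => ENNReal.ofReal ((2 * δ n) ^ (d : ℝ))) ω ∂μ)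
          ≤ ENNReal.ofReal ((2 * δ n) ^ (d : ℝ)) * ENNReal.ofReal ((δ n) ^ κ) := by
      intro i _
      rw [lintegral_indicator_const (measurableSet_toMeasurable _ _)]
      exact mul_le_mul_right (hμB n i) _
    calc ∑ i ∈ Finset.range (N n + 1),
          ∫⁻ ω, (B n i).indicator (fun _ => ENNReal.ofReal ((2 * δ n) ^ (d : ℝ))) ω ∂μ
        ≤ ∑ _i ∈ Finset.range (N n + 1),
            ENNReal.ofReal ((2 * δ n) ^ (d : ℝ)) * ENNReal.ofReal ((δ n) ^ κ) :=
          Finset.sum_le_sum hterm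
      _ = ((N n + 1 : ℕ) : ℝ≥0∞) *
            (ENNReal.ofReal ((2 * δ n) ^ (d : ℝ)) * ENNReal.ofReal ((δ n) ^ κ)) := by
          simp [Finset.sum_const, nsmul_eq_mul]
      _ = ENNReal.ofReal (((N n + 1 : ℕ) : ℝ)) *
            ENNReal.ofReal ((2 * δ n) ^ (d : ℝ) * (δ n) ^ κ) := by
          rw [ENNReal.ofReal_natCast, ENNReal.ofReal_mul (Real.rpow_nonneg (by linarith [hδpos n]) _)]
  -- real computation
  have hreal : ∀ n, δ n ≤ 1 →
      ((N n + 1 : ℕ) : ℝ) * ((2 * δ n) ^ (d : ℝ) * (δ n) ^ κ)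
        ≤ 3 * 2 ^ (d : ℝ) * (δ n) ^ ε := by
    intro n hδ1
    have hδn : 0 < δ n := hδpos n
    have h1 : ((N n + 1 : ℕ) : ℝ) ≤ (δ n)⁻¹ + 2 := by
      push_cast
      have := (Nat.ceil_lt_add_one (by positivity : (0:ℝ) ≤ (δ n)⁻¹)).le
      simp only [hN]
      linarith
    have e12 : (2 * δ n) ^ (d : ℝ) * (δ n) ^ κ = 2 ^ (d : ℝ) * (δ n) ^ ((d : ℝ) + κ) := by
      rw [Real.mul_rpow (by norm_num) hδn.le, Real.rpow_add hδn]
      ring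
    have e3 : (δ n)⁻¹ * (δ n) ^ ((d : ℝ) + κ) = (δ n) ^ ε := by
      have : (d : ℝ) + κ = ε + 1 := by rw [hεdef]; ring
      rw [this, Real.rpow_add hδn, Real.rpow_one]
      field_simp
    have e4 : (δ n) ^ ((d : ℝ) + κ) ≤ (δ n) ^ ε :=
      Real.rpow_le_rpow_of_exponent_ge hδn hδ1 (by rw [hεdef]; linarith)
    have h2d : (0 : ℝ) < 2 ^ (d : ℝ) := Real.rpow_pos_of_pos (by norm_num) _
    calc ((N n + 1 : ℕ) : ℝ) * ((2 * δ n) ^ (d : ℝ) * (δ n) ^ κ)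
        ≤ ((δ n)⁻¹ + 2) * ((2 * δ n) ^ (d : ℝ) * (δ n) ^ κ) := by
          apply mul_le_mul_of_nonneg_right h1 (by positivity)
      _ = 2 ^ (d : ℝ) * ((δ n)⁻¹ * (δ n) ^ ((d : ℝ) + κ)) +
            2 * 2 ^ (d : ℝ) * (δ n) ^ ((d : ℝ) + κ) := by rw [e12]; ring
      _ = 2 ^ (d : ℝ) * (δ n) ^ ε + 2 * 2 ^ (d : ℝ) * (δ n) ^ ((d : ℝ) + κ) := by rw [e3]
      _ ≤ 2 ^ (d : ℝ) * (δ n) ^ ε + 2 * 2 ^ (d : ℝ) * (δ n) ^ ε := by nlinarith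
      _ = 3 * 2 ^ (d : ℝ) * (δ n) ^ ε := by ring
  -- geometric bound along the subsequence
  set r : ℝ := (2 : ℝ)⁻¹ ^ ε with hrdef
  have hr0 : 0 < r := Real.rpow_pos_of_pos (by norm_num) _
  have hr1 : r < 1 := Real.rpow_lt_one (by norm_num) (by norm_num) hε
  have hgeom : ∀ k, ∫⁻ ω, S (φ k) ω ∂μ ≤
      ENNReal.ofReal (3 * 2 ^ (d : ℝ) * r ^ (k + 1)) := by
    intro k
    refine (hint (φ k)).trans ?_
    rw [← ENNReal.ofReal_mul (by positivity)]
    refine ENNReal.ofReal_le_ofReal ?_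
    refine (hreal (φ k) (hφ1 k)).trans ?_
    have hpow : (δ (φ k)) ^ ε ≤ r ^ (k + 1) := by
      have h1 : (δ (φ k)) ^ ε ≤ ((2 : ℝ)⁻¹ ^ (k + 1)) ^ ε :=
        Real.rpow_le_rpow (hδpos _).le (hφ k) hε.le
      have h2 : (((2 : ℝ)⁻¹) ^ (k + 1)) ^ ε = r ^ (k + 1) := by
        rw [hrdef, ← Real.rpow_natCast ((2 : ℝ)⁻¹) (k + 1),
          ← Real.rpow_natCast (((2 : ℝ)⁻¹) ^ ε) (k + 1),
          ← Real.rpow_mul (by norm_num), ← Real.rpow_mul (by norm_num), mul_comm]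
      exact h1.trans h2.le
    have h2d : (0 : ℝ) < 2 ^ (d : ℝ) := Real.rpow_pos_of_pos (by norm_num) _
    nlinarith
  -- Borel–Cantelli
  have hsummable : Summable (fun k : ℕ => 3 * 2 ^ (d : ℝ) * r ^ (k + 1)) := by
    have h := (summable_geometric_of_lt_one hr0.le hr1).mul_left (3 * 2 ^ (d : ℝ) * r)
    exact h.congr fun k => by rw [pow_succ]; ring
  have hTne : ∫⁻ ω, ∑' k, S (φ k) ω ∂μ ≠ ⊤ := by
    rw [lintegral_tsum (fun k => (hSmeas (φ k)).aemeasurable)]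
    refine ne_top_of_le_ne_top
      (ENNReal.ofReal_ne_top (r := ∑' k, 3 * 2 ^ (d : ℝ) * r ^ (k + 1))) ?_
    calc ∑' k, ∫⁻ ω, S (φ k) ω ∂μ
        ≤ ∑' k, ENNReal.ofReal (3 * 2 ^ (d : ℝ) * r ^ (k + 1)) := ENNReal.tsum_le_tsum hgeom
      _ = ENNReal.ofReal (∑' k, 3 * 2 ^ (d : ℝ) * r ^ (k + 1)) :=
          (ENNReal.ofReal_tsum_of_nonneg (fun k => by positivity) hsummable).symm
  have hae : ∀ᵐ ω ∂μ, (∑' k, S (φ k) ω) < ⊤ :=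
    ae_lt_top (Measurable.ennreal_tsum fun k => hSmeas (φ k)) hTne
  filter_upwards [hae] with ω hω
  have hs0 : Tendsto (fun k => S (φ k) ω) atTop (nhds 0) :=
    ENNReal.tendsto_atTop_zero_of_tsum_ne_top hω.ne
  -- the covering
  set t : ∀ k : ℕ, Fin (N (φ k) + 1) → Set ℝ := fun k i =>
    if ω ∈ A (φ k) (i : ℕ) then
      Set.Ioo (c (φ k) (i : ℕ) - δ (φ k)) (c (φ k) (i : ℕ) + δ (φ k)) else ∅ with ht
  have hHM : μH[(d : ℝ)] (L ω) ≤
      liminf (fun k => ∑ i, EMetric.diam (t k i) ^ (d : ℝ)) atTop := by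
    apply MeasureTheory.Measure.hausdorffMeasure_le_liminf_sum (d : ℝ) (L ω)
      (fun k => ENNReal.ofReal (2 * δ (φ k)))
    · -- radii tend to 0
      have htd : Tendsto (fun k => 2 * δ (φ k)) atTop (nhds 0) := by
        have hup : ∀ k : ℕ, 2 * δ (φ k) ≤ (2 : ℝ)⁻¹ ^ k := by
          intro k
          have := hφ k
          have h2 : (2:ℝ)⁻¹ ^ (k+1) = (2:ℝ)⁻¹ * (2:ℝ)⁻¹ ^ k := by rw [pow_succ]; ring
          nlinarith [pow_pos (by norm_num : (0:ℝ) < (2:ℝ)⁻¹) k]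
        have hlo : ∀ k : ℕ, (0:ℝ) ≤ 2 * δ (φ k) := fun k => by linarith [hδpos (φ k)]
        exact squeeze_zero hlo hup
          (tendsto_pow_atTop_nhds_zero_of_lt_one (by norm_num) (by norm_num))
      simpa using ENNReal.tendsto_ofReal htd
    · -- diameters
      refine Eventually.of_forall fun k => fun i => ?_
      by_cases h : ω ∈ A (φ k) (i : ℕ)
      · simp only [ht, if_pos h]
        rw [Real.ediam_Ioo]
        exact ENNReal.ofReal_le_ofReal (by linarith)
      · simp [ht, if_neg h]
    · -- covering
      refine Eventually.of_forall fun k => fun y hy => ?_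
      obtain ⟨hy0, hy1⟩ := hLsub ω hy
      have hδn : 0 < δ (φ k) := hδpos _
      set i₀ : ℕ := ⌊y / δ (φ k)⌋₊ with hi₀
      have hi₀N : i₀ ≤ N (φ k) := by
        refine (Nat.floor_le_floor ?_).trans (Nat.floor_le_ceil _)
        rw [div_le_iff₀ hδn, inv_mul_cancel₀ hδn.ne']
        exact hy1
      have hlow : (i₀ : ℝ) * δ (φ k) ≤ y := by
        have h := Nat.floor_le (div_nonneg hy0 hδn.le)
        calc (i₀ : ℝ) * δ (φ k) ≤ (y / δ (φ k)) * δ (φ k) :=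
              mul_le_mul_of_nonneg_right h hδn.le
          _ = y := div_mul_cancel₀ y hδn.ne'
      have hup : y < ((i₀ : ℝ) + 1) * δ (φ k) := by
        have := Nat.lt_floor_add_one (y / δ (φ k))
        rw [div_lt_iff₀ hδn] at this
        exact this
      have hceq : c (φ k) i₀ = (i₀ : ℝ) * δ (φ k) := min_eq_left (hlow.trans hy1)
      have hmem : y ∈ Set.Ioo (c (φ k) i₀ - δ (φ k)) (c (φ k) i₀ + δ (φ k)) := by
        rw [hceq]
        constructor
        · linarith
        · linarith
      have hAin : ω ∈ A (φ k) i₀ := ⟨y, hy, hmem⟩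
      refine Set.mem_iUnion.2 ⟨⟨i₀, Nat.lt_succ_of_le hi₀N⟩, ?_⟩
      simp only [ht, if_pos hAin]
      exact hmem
  -- compare with S
  have hle : ∀ k, (∑ i, EMetric.diam (t k i) ^ (d : ℝ)) ≤ S (φ k) ω := by
    intro k
    rw [hS]
    rw [Fin.sum_univ_eq_sum_range
      (fun j => EMetric.diam
        (if ω ∈ A (φ k) j then
          Set.Ioo (c (φ k) j - δ (φ k)) (c (φ k) j + δ (φ k)) else ∅) ^ (d : ℝ))]
    refine Finset.sum_le_sum fun j _ => ?_
    by_cases h : ω ∈ A (φ k) j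
    · rw [if_pos h, EMetric.diam, Real.ediam_Ioo]
      have hval : ENNReal.ofReal (c (φ k) j + δ (φ k) - (c (φ k) j - δ (φ k))) ^ (d : ℝ)
          = ENNReal.ofReal ((2 * δ (φ k)) ^ (d : ℝ)) := by
        rw [show c (φ k) j + δ (φ k) - (c (φ k) j - δ (φ k)) = 2 * δ (φ k) by ring]
        exact ENNReal.ofReal_rpow_of_pos (by linarith [hδpos (φ k)])
      rw [hval]
      have hBmem : ω ∈ B (φ k) j := subset_toMeasurable μ _ h
      rw [Set.indicator_of_mem hBmem]
    · rw [if_neg h]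
      simp only [EMetric.diam, Metric.ediam_empty]
      rw [ENNReal.zero_rpow_of_pos hd0]
      exact zero_le
  -- conclude μH = 0
  have hμH0 : μH[(d : ℝ)] (L ω) = 0 := by
    refine le_antisymm ?_ zero_le
    refine hHM.trans ?_
    calc liminf (fun k => ∑ i, EMetric.diam (t k i) ^ (d : ℝ)) atTop
        ≤ liminf (fun k => S (φ k) ω) atTop :=
          liminf_le_liminf (Eventually.of_forall hle)
      _ = 0 := hs0.liminf_eq
  exact dimH_le_of_hausdorffMeasure_ne_top (by rw [hμH0]; exact ENNReal.zero_ne_top)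

/-- Covering argument: if a random closed subset L of [0,1] hits an interval of radius δ_n
with probability at most δ_n^κ, uniformly in the centre, then Dim_H L ≤ 1 − κ a.s. -/
theorem hausdorff_dim_upper_bound_of_hitting
    {Ω : Type*} [MeasurableSpace Ω] (μ : Measure Ω) [IsProbabilityMeasure μ]
    (L : Ω → Set ℝ) (hLclosed : ∀ ω, IsClosed (L ω)) (hLsub : ∀ ω, L ω ⊆ Set.Icc 0 1)
    (κ : ℝ) (hκ : κ ∈ Set.Ioo (0 : ℝ) 1)
    (δ : ℕ → ℝ) (hδpos : ∀ n, 0 < δ n) (hδ0 : Tendsto δ atTop (nhds 0))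
    (hhit : ∀ n : ℕ, ∀ x ∈ Set.Icc (0 : ℝ) 1,
      μ {ω | (L ω ∩ Set.Ioo (x - δ n) (x + δ n)).Nonempty}
        ≤ ENNReal.ofReal ((δ n) ^ κ)) :
    ∀ᵐ ω ∂μ, dimH (L ω) ≤ ENNReal.ofReal (1 - κ) := by
  have hκ1 : (0:ℝ) < 1 - κ := by linarith [hκ.2]
  set dm : ℕ → ℝ≥0 := fun m => Real.toNNReal (1 - κ + ((m : ℝ) + 1)⁻¹) with hdm
  have hdmgt : ∀ m, 1 - κ < ((dm m : ℝ≥0) : ℝ) := by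
    intro m
    rw [hdm]
    have hpos : (0:ℝ) < ((m : ℝ) + 1)⁻¹ := by positivity
    rw [Real.coe_toNNReal _ (by positivity)]
    linarith
  have hall : ∀ᵐ ω ∂μ, ∀ m : ℕ, dimH (L ω) ≤ ((dm m : ℝ≥0) : ℝ≥0∞) :=
    ae_all_iff.2 fun m =>
      aux_dimH_le μ L hLsub κ hκ δ hδpos hδ0 hhit (dm m) (hdmgt m)
  filter_upwards [hall] with ω hω
  have htend : Tendsto (fun m : ℕ => ((dm m : ℝ≥0) : ℝ≥0∞)) atTop
      (nhds (ENNReal.ofReal (1 - κ))) := by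
    have hrt : Tendsto (fun m : ℕ => 1 - κ + ((m : ℝ) + 1)⁻¹) atTop (nhds (1 - κ)) := by
      have h0 : Tendsto (fun m : ℕ => ((m : ℝ) + 1)⁻¹) atTop (nhds 0) := by
        simpa [one_div] using tendsto_one_div_add_atTop_nhds_zero_nat (𝕜 := ℝ)
      simpa using tendsto_const_nhds.add h0
    have := ENNReal.tendsto_ofReal hrt
    convert this using 1
    rfl
  exact ge_of_tendsto' htend hω
end
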